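/- arXiv:2202.06234 — 2 statements merged into one kernel-verified Lean document; each statement's English description precedes it below -/
import Mathlib

section
/- Let G be the m×n grid graph with m,n ≥ 1 and mn ≥ 2. If G has a spanning tree in which every vertex has degree 1 or 3, then mn ≡ 2 (mod 4). -/
/-- The `m × n` grid graph: vertices differing by 1 in exactly one coordinate are adjacent. -/
def gridGraph (m n : ℕ) : SimpleGraph (Fin m × Fin n) :=
  SimpleGraph.fromRel (fun v w =>
    (v.1 = w.1 ∧ v.2.val + 1 = w.2.val) ∨ (v.2 = w.2 ∧ v.1.val + 1 = w.1.val))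

theorem stmt_6 (m n : ℕ) (hm : 1 ≤ m) (hn : 1 ≤ n) (hmn : 2 ≤ m * n)
    (T : SimpleGraph (Fin m × Fin n)) (hsub : T ≤ gridGraph m n)
    (htree : T.IsTree)
    (hdeg : ∀ v, (T.neighborSet v).ncard = 1 ∨ (T.neighborSet v).ncard = 3) :
    m * n % 4 = 2 := by
  classical
  haveI : NeZero m := ⟨by omega⟩
  haveI : NeZero n := ⟨by omega⟩
  -- 
  let c : Fin m × Fin n → ZMod 2 := fun v => ((v.1.val + v.2.val : ℕ) : ZMod 2)
  have h11 : (1 + 1 : ZMod 2) = 0 := by decide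
  -- adjacency flips color
  have hbip : ∀ v w : Fin m × Fin n, T.Adj v w → c w = c v + 1 := by
    intro v w hvw
    have h := hsub hvw
    simp only [gridGraph, SimpleGraph.fromRel_adj] at h
    obtain ⟨-, h | h⟩ := h <;> obtain ⟨h1, h2⟩ | ⟨h1, h2⟩ := h
    · have : w.1.val + w.2.val = v.1.val + v.2.val + 1 := by
        have := congrArg Fin.val h1; omega
      simp only [c, this]; push_cast; ring
    · have : w.1.val + w.2.val = v.1.val + v.2.val + 1 := by
        have := congrArg Fin.val h1; omega
      simp only [c, this]; push_cast; ring
    · have hv : v.1.val + v.2.val = w.1.val + w.2.val + 1 := by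
        have := congrArg Fin.val h1; omega
      have : c v = c w + 1 := by simp only [c, hv]; push_cast; ring
      rw [this, add_assoc, h11, add_zero]
    · have hv : v.1.val + v.2.val = w.1.val + w.2.val + 1 := by
        have := congrArg Fin.val h1; omega
      have : c v = c w + 1 := by simp only [c, hv]; push_cast; ring
      rw [this, add_assoc, h11, add_zero]
  -- degrees are odd
  have hdeg' : ∀ v : Fin m × Fin n, (T.degree v : ZMod 2) = 1 := by
    intro v
    have h : (T.neighborSet v).ncard = T.degree v := by
      rw [Set.ncard_eq_toFinset_card']
      simp [SimpleGraph.neighborFinset_def, SimpleGraph.degree]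
    rcases hdeg v with h1 | h1 <;> rw [h] at h1 <;> rw [h1] <;> decide
  -- number of edges
  have hedges : T.edgeFinset.card + 1 = m * n := by
    have := htree.card_edgeFinset
    simpa using this
  -- mn is even
  have heven : (m * n) % 2 = 0 := by
    have h1 : ((∑ v : Fin m × Fin n, T.degree v : ℕ) : ZMod 2) = 0 := by
      rw [T.sum_degrees_eq_twice_card_edges]; push_cast
      ring_nf
      rw [show (2:ZMod 2) = 0 from rfl]; ring
    rw [Nat.cast_sum] at h1
    simp only [hdeg', Finset.sum_const, nsmul_eq_mul, mul_one] at h1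
    have h2 : ((Finset.univ.card : ℕ) : ZMod 2) = 0 := h1
    rw [show (Finset.univ : Finset (Fin m × Fin n)).card = m * n by simp [Fintype.card_prod],
      ZMod.natCast_eq_zero_iff] at h2
    omega
  -- B0: vertices of color 0
  set B0 : Finset (Fin m × Fin n) := Finset.univ.filter (fun v => c v = 0) with hB0
  set B1 : Finset (Fin m × Fin n) := Finset.univ.filter (fun v => c v = 1) with hB1
  -- sum of degrees over B0 = edge count
  have hsum : ∑ v ∈ B0, T.degree v = T.edgeFinset.card := by
    show ∑ v ∈ B0, (T.neighborFinset v).card = _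
    rw [← Finset.card_sigma]
    refine Finset.card_bij (fun p _ => s(p.1, p.2)) ?_ ?_ ?_
    · rintro ⟨v, w⟩ hp
      rw [Finset.mem_sigma] at hp
      rw [SimpleGraph.mem_edgeFinset, SimpleGraph.mem_edgeSet]
      exact (SimpleGraph.mem_neighborFinset _ _ _).1 hp.2
    · rintro ⟨v, w⟩ hp ⟨v', w'⟩ hp' heq
      rw [Finset.mem_sigma] at hp hp'
      rw [Sym2.eq_iff] at heq
      rcases heq with ⟨h1, h2⟩ | ⟨h1, h2⟩
      · exact Sigma.ext h1 (heq_of_eq h2)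
      · exfalso
        have hv : c v = 0 := (Finset.mem_filter.1 hp.1).2
        have hv' : c v' = 0 := (Finset.mem_filter.1 hp'.1).2
        have hadj : T.Adj v w := (SimpleGraph.mem_neighborFinset _ _ _).1 hp.2
        have hcw := hbip v w hadj
        have h2' : w = v' := h2
        rw [h2', hv', hv] at hcw
        simp at hcw
    · intro e he
      rw [SimpleGraph.mem_edgeFinset] at he
      induction e with
      | h v w =>
        rw [SimpleGraph.mem_edgeSet] at he
        have hne := hbip v w he
        by_cases hv : c v = 0
        · refine ⟨⟨v, w⟩, ?_, rfl⟩
          rw [Finset.mem_sigma]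
          exact ⟨Finset.mem_filter.2 ⟨Finset.mem_univ _, hv⟩,
            (SimpleGraph.mem_neighborFinset _ _ _).2 he⟩
        · refine ⟨⟨w, v⟩, ?_, Sym2.eq_swap⟩
          rw [Finset.mem_sigma]
          have hw : c w = 0 := by
            have : ∀ x : ZMod 2, x ≠ 0 → x + 1 = 0 := by decide
            rw [hne]; exact this _ hv
          exact ⟨Finset.mem_filter.2 ⟨Finset.mem_univ _, hw⟩,
            (SimpleGraph.mem_neighborFinset _ _ _).2 he.symm⟩
  -- edge parity
  have hpar : T.edgeFinset.card % 2 = B0.card % 2 := by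
    have : ((∑ v ∈ B0, T.degree v : ℕ) : ZMod 2) = (B0.card : ZMod 2) := by
      rw [Nat.cast_sum]
      simp [hdeg']
    rw [hsum] at this
    exact (ZMod.natCast_eq_natCast_iff' _ _ _).1 this
  -- |B0| = |B1|
  have hcards : B0.card = B1.card := by
    have key : ∀ (k : ℕ) [NeZero k], 2 ∣ k → ∀ x : Fin k, ((((x + 1 : Fin k)).val : ℕ) : ZMod 2) = ((x.val : ℕ) : ZMod 2) + 1 := by
      intro k _ hk x
      have h1 : (x + 1 : Fin k).val = (x.val + 1 % k) % k := by rw [Fin.val_add, Fin.val_one']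
      have h2 : ((x.val + 1 % k) % k) % 2 = (x.val + 1) % 2 := by
        obtain ⟨t, rfl⟩ := hk
        have := Nat.mod_mod_of_dvd (x.val + 1 % (2*t)) (dvd_mul_right 2 t)
        have h1k : 1 % (2*t) % 2 = 1 % 2 := Nat.mod_mod_of_dvd 1 (dvd_mul_right 2 t)
        omega
      rw [h1, show ((((x.val + 1 % k) % k) : ℕ) : ZMod 2) = ((((x.val + 1 % k) % k) % 2 : ℕ) : ZMod 2) from (ZMod.natCast_mod _ 2).symm, h2, ZMod.natCast_mod]
      push_cast; ring
    rcases (Nat.prime_two.dvd_mul.1 (Nat.dvd_of_mod_eq_zero heven)) with hdvd | hdvd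
    · -- shift first coordinate
      refine Finset.card_bij' (fun p _ => ((p.1 + 1 : Fin m), p.2))
        (fun p _ => ((p.1 - 1 : Fin m), p.2)) ?_ ?_ ?_ ?_
      · intro p hp
        have hp0 : c p = 0 := (Finset.mem_filter.1 hp).2
        refine Finset.mem_filter.2 ⟨Finset.mem_univ _, ?_⟩
        show ((((p.1 + 1 : Fin m)).val + p.2.val : ℕ) : ZMod 2) = 1
        push_cast
        rw [key m hdvd p.1]
        have : c p = ((p.1.val : ℕ) : ZMod 2) + ((p.2.val : ℕ) : ZMod 2) := by
          simp only [c]; push_cast; ring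
        rw [this] at hp0
        linear_combination hp0
      · intro p hp
        have hp1 : c p = 1 := (Finset.mem_filter.1 hp).2
        refine Finset.mem_filter.2 ⟨Finset.mem_univ _, ?_⟩
        show ((((p.1 - 1 : Fin m)).val + p.2.val : ℕ) : ZMod 2) = 0
        have hk := key m hdvd (p.1 - 1)
        rw [sub_add_cancel] at hk
        have : c p = ((p.1.val : ℕ) : ZMod 2) + ((p.2.val : ℕ) : ZMod 2) := by
          simp only [c]; push_cast; ring
        rw [this] at hp1
        push_cast
        push_cast at hk hp1
        linear_combination hp1 - hk
      · intro p _; simp [add_sub_cancel_right]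
      · intro p _; simp [sub_add_cancel]
    · refine Finset.card_bij' (fun p _ => (p.1, (p.2 + 1 : Fin n)))
        (fun p _ => (p.1, (p.2 - 1 : Fin n))) ?_ ?_ ?_ ?_
      · intro p hp
        have hp0 : c p = 0 := (Finset.mem_filter.1 hp).2
        refine Finset.mem_filter.2 ⟨Finset.mem_univ _, ?_⟩
        show ((p.1.val + ((p.2 + 1 : Fin n)).val : ℕ) : ZMod 2) = 1
        push_cast
        rw [key n hdvd p.2]
        have : c p = ((p.1.val : ℕ) : ZMod 2) + ((p.2.val : ℕ) : ZMod 2) := by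
          simp only [c]; push_cast; ring
        rw [this] at hp0
        linear_combination hp0
      · intro p hp
        have hp1 : c p = 1 := (Finset.mem_filter.1 hp).2
        refine Finset.mem_filter.2 ⟨Finset.mem_univ _, ?_⟩
        show ((p.1.val + ((p.2 - 1 : Fin n)).val : ℕ) : ZMod 2) = 0
        have hk := key n hdvd (p.2 - 1)
        rw [sub_add_cancel] at hk
        have : c p = ((p.1.val : ℕ) : ZMod 2) + ((p.2.val : ℕ) : ZMod 2) := by
          simp only [c]; push_cast; ring
        rw [this] at hp1
        push_cast
        push_cast at hk hp1
        linear_combination hp1 - hk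
      · intro p _; simp [add_sub_cancel_right]
      · intro p _; simp [sub_add_cancel]
  -- B0 + B1 = mn
  have htotal : B0.card + B1.card = m * n := by
    have hne : ∀ x : ZMod 2, ¬ x = 0 ↔ x = 1 := by decide
    have hfilt : (Finset.univ.filter (fun v : Fin m × Fin n => ¬ c v = 0))
        = Finset.univ.filter (fun v => c v = 1) :=
      Finset.filter_congr (fun x _ => by simp [hne])
    have h := Finset.card_filter_add_card_filter_not
      (s := (Finset.univ : Finset (Fin m × Fin n))) (p := fun v => c v = 0)
    rw [show (Finset.univ : Finset (Fin m × Fin n)).card = m * n by simp [Fintype.card_prod]] at h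
    rw [hB0, hB1, ← h]
    congr 1
    exact congrArg Finset.card hfilt.symm
  omega
end

section
/- The 4×n grid graph has no spanning tree in which every vertex has degree 1 or 3, for any n ≥ 1. -/
open Finset

namespace SimpleGraph

variable {V : Type*} {G H : SimpleGraph V} {s t : Finset V}

theorem IsBipartiteWith.mono (h : H.IsBipartiteWith s t) (hGH : G ≤ H) :
    G.IsBipartiteWith s t :=
  ⟨h.disjoint, fun _ _ hadj => h.mem_of_adj (hGH hadj)⟩

theorem IsBipartiteWith.even_card_edgeFinset_iff [Fintype V] [DecidableRel G.Adj]
    (h : G.IsBipartiteWith s t) (hodd : ∀ v ∈ s, Odd (G.degree v)) :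
    Even #G.edgeFinset ↔ Even #s := by
  rw [← isBipartiteWith_sum_degrees_eq_card_edges h, even_sum_iff_even_card_odd,
    filter_true_of_mem hodd]

theorem ncard_neighborSet_eq_degree [Fintype V] (G : SimpleGraph V) [DecidableRel G.Adj] (v : V) :
    (G.neighborSet v).ncard = G.degree v := by
  rw [Set.ncard_eq_toFinset_card', ← card_neighborFinset_eq_degree]
  rfl

end SimpleGraph

def gridColorClass (m n r : ℕ) : Finset (Fin m × Fin n) :=
  {v | (v.1.val + v.2.val) % 2 = r}

theorem gridGraph_isBipartiteWith (m n : ℕ) :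
    (gridGraph m n).IsBipartiteWith (gridColorClass m n 0) (gridColorClass m n 1) := by
  refine ⟨?_, fun v w hvw => ?_⟩
  · rw [Finset.disjoint_coe, gridColorClass, gridColorClass, Finset.disjoint_filter]
    omega
  · simp only [gridGraph, SimpleGraph.fromRel_adj, Fin.ext_iff] at hvw
    simp only [gridColorClass, Finset.coe_filter, Finset.mem_univ, true_and, Set.mem_ofPred_eq]
    omega

theorem card_gridColorClass_zero_eq_one {m : ℕ} (n : ℕ) (hm : Even m) :
    #(gridColorClass m n 0) = #(gridColorClass m n 1) := by
  obtain ⟨k, rfl⟩ := hm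
  -- reflecting the rows flips the colour, since the number of rows is even
  refine card_nbij' (fun v => (v.1.rev, v.2)) (fun v => (v.1.rev, v.2)) ?_ ?_
    (fun _ _ => by simp) (fun _ _ => by simp) <;>
    intro v <;> have := v.1.isLt <;>
    simp only [gridColorClass, coe_filter, mem_univ, true_and, Set.mem_ofPred_eq, Fin.val_rev] <;>
    omega

theorem two_mul_card_gridColorClass_zero {m : ℕ} (n : ℕ) (hm : Even m) :
    2 * #(gridColorClass m n 0) = m * n := by
  have hsplit : #(gridColorClass m n 0) + #(gridColorClass m n 1) = m * n := by
    have := card_filter_add_card_filter_not (s := (univ : Finset (Fin m × Fin n)))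
      (fun v => (v.1.val + v.2.val) % 2 = 0)
    rw [card_univ, Fintype.card_prod, Fintype.card_fin, Fintype.card_fin] at this
    rw [← this, gridColorClass, gridColorClass]
    congr 2
    exact filter_congr fun _ _ => by omega
  have := card_gridColorClass_zero_eq_one n hm
  omega

theorem stmt_10_general (n : ℕ) :
    ¬ ∃ T : SimpleGraph (Fin 4 × Fin n),
      T ≤ gridGraph 4 n ∧ T.IsTree ∧
        ∀ v, (T.neighborSet v).ncard = 1 ∨ (T.neighborSet v).ncard = 3 := by
  classical
  rintro ⟨T, hle, htree, hdeg⟩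
  have hodd : ∀ v, Odd (T.degree v) := fun v => by
    rcases hdeg v with h | h <;> rw [T.ncard_neighborSet_eq_degree] at h <;> rw [h] <;> decide
  have hparity := ((gridGraph_isBipartiteWith 4 n).mono hle).even_card_edgeFinset_iff
    (fun v _ => hodd v)
  have hedges : #T.edgeFinset + 1 = 4 * n := by simpa using htree.card_edgeFinset
  have hclass := two_mul_card_gridColorClass_zero n (m := 4) (by decide)
  rw [Nat.even_iff, Nat.even_iff] at hparity
  omega

theorem stmt_10 (n : ℕ) (hn : 1 ≤ n) :
    ¬ ∃ T : SimpleGraph (Fin 4 × Fin n),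
      T ≤ gridGraph 4 n ∧ T.IsTree ∧
        ∀ v, (T.neighborSet v).ncard = 1 ∨ (T.neighborSet v).ncard = 3 :=
  stmt_10_general n
end
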